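/- Fix c ≥ 1 and set v_n := (2c)^{−|n|} for n ∈ ℤ. Let V be the bounded invertible operator on ℓ²(ℤ,ℂ) with (Vf)(n) = (v_n/v_{n−1})·f(n−1). Then: the set S₀((3c/2)·V) = { f : ‖((3c/2)·V)^N f‖ → 0 } is dense in ℓ²(ℤ,ℂ), while S₀((2/(3c))·(V*)⁻¹) = {0}; likewise S₀((3c/2)·V⁻¹) is dense in ℓ²(ℤ,ℂ), while S₀((2/(3c))·V*) = {0}. -/

import Mathlib

/-!
`V` is a weighted shift: `V^N e_k = (v_{k+N} / v_k) e_{k+N}`, and `V⁻¹` is the weighted shift in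
the other direction. Since `|k + N| ≥ N - |k|`, the ratio `v_{k±N} / v_k` is at most a constant
times `(2c)^{-N}`, so `(3c/2)^N` times it tends to `0` for every `k`: all basis vectors lie in
`S₀`, which is a linear subspace, hence dense. Dually, for `T = (2/(3c))·V` (or `V⁻¹`),
`⟪(T*)^N f, e_{m∓N}⟫ = ⟪f, T^N e_{m∓N}⟫` has modulus at least a constant times `(4/3)^N |f m|`,
so a vector whose `T*`-orbit tends to `0` has every coordinate equal to `0`.
-/

noncomputable section
open Real ContinuousLinearMap Filter

/-- The Hilbert space `ℓ²(ℤ, ℂ)` of square-summable two-sided complex sequences. -/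
abbrev l2 : Type := lp (fun _ : ℤ => ℂ) 2

/-- The set `S₀(T)` of vectors whose orbit under `T` tends to `0` in norm. -/
def S0 (T : l2 →L[ℂ] l2) : Set l2 :=
  {f | Tendsto (fun N : ℕ => ‖(T ^ N) f‖) atTop (nhds 0)}

def S0Submodule (T : l2 →L[ℂ] l2) : Submodule ℂ l2 where
  carrier := S0 T
  zero_mem' := by simp [S0]
  add_mem' {f g} (hf : Tendsto _ _ _) (hg : Tendsto _ _ _) := by
    show Tendsto (fun N : ℕ => ‖(T ^ N) (f + g)‖) atTop (nhds 0)
    have hsum := hf.add hg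
    rw [add_zero] at hsum
    exact squeeze_zero (fun _ => norm_nonneg _)
      (fun N => by rw [map_add]; exact norm_add_le _ _) hsum
  smul_mem' a f hf := by
    have := hf.const_mul ‖a‖
    rw [mul_zero] at this
    simpa only [S0, Set.mem_ofPred_eq, map_smul, norm_smul] using this

theorem norm_single_one (k : ℤ) : ‖(lp.single 2 k (1 : ℂ) : l2)‖ = 1 := by
  simp [lp.norm_single]

theorem dense_S0_of_single_mem {T : l2 →L[ℂ] l2} (h : ∀ k, lp.single 2 k (1 : ℂ) ∈ S0 T) :
    Dense (S0 T) := by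
  intro f
  refine mem_closure_of_tendsto (lp.hasSum_single ENNReal.ofNat_ne_top f)
    (Eventually.of_forall fun s => (S0Submodule T).sum_mem fun k _ => ?_)
  simpa [← lp.single_smul] using (S0Submodule T).smul_mem (f k) (h k)

theorem S0_adjoint_eq_singleton_zero {T : l2 →L[ℂ] l2}
    (h : ∀ m, ∃ (k : ℕ → ℤ) (w : ℕ → ℂ), Tendsto (fun N => ‖w N‖) atTop atTop ∧
      ∀ N, (T ^ N) (lp.single 2 (k N) 1) = w N • lp.single 2 m 1) :
    S0 (adjoint T) = {0} := by
  refine Set.eq_singleton_iff_unique_mem.mpr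
    ⟨by simp [S0], fun f hf => lp.ext (funext fun m => ?_)⟩
  obtain ⟨k, w, hw, hTk⟩ := h m
  by_contra hfm
  have hlower : ∀ N, ‖w N‖ * ‖f m‖ ≤ ‖(adjoint T ^ N) f‖ := fun N => calc
    ‖w N‖ * ‖f m‖ = ‖inner ℂ ((adjoint T ^ N) f) (lp.single 2 (k N) (1 : ℂ))‖ := by
      rw [← star_eq_adjoint, ← star_pow, star_eq_adjoint, adjoint_inner_left, hTk,
        inner_smul_right, lp.inner_single_right]
      simp
    _ ≤ ‖(adjoint T ^ N) f‖ := by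
      simpa [norm_single_one] using norm_inner_le_norm (𝕜 := ℂ) ((adjoint T ^ N) f)
        (lp.single 2 (k N) (1 : ℂ))
  exact not_tendsto_atTop_of_tendsto_nhds hf
    (tendsto_atTop_mono hlower (hw.atTop_mul_const (norm_pos_iff.mpr hfm)))

def IsWeightedShift (u : ℤ → ℝ) (d : ℤ) (A : l2 →L[ℂ] l2) : Prop :=
  ∀ (f : l2) (n : ℤ), A f n = ((u n / u (n - d) : ℝ) : ℂ) * f (n - d)

namespace IsWeightedShift

variable {u : ℤ → ℝ} {d : ℤ} {A : l2 →L[ℂ] l2}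

theorem apply_single (hA : IsWeightedShift u d A) (k : ℤ) :
    A (lp.single 2 k 1) = ((u (k + d) / u k : ℝ) : ℂ) • lp.single 2 (k + d) 1 := by
  ext n
  rw [hA, lp.coeFn_smul, Pi.smul_apply, lp.single_apply, lp.single_apply]
  by_cases hn : n = k + d
  · subst hn
    simp
  · have hn' : n - d ≠ k := fun h => hn (by omega)
    simp [Pi.single_eq_of_ne hn, Pi.single_eq_of_ne hn']

theorem pow_apply_single (hA : IsWeightedShift u d A) (hu : ∀ n, u n ≠ 0) (N : ℕ) (k : ℤ) :
    (A ^ N) (lp.single 2 k 1) =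
      ((u (k + N * d) / u k : ℝ) : ℂ) • lp.single 2 (k + N * d) 1 := by
  induction N generalizing k with
  | zero => simp [div_self (hu k)]
  | succ N ih =>
    rw [pow_succ, mul_apply_eq_comp, hA.apply_single, map_smul, ih, smul_smul,
      ← Complex.ofReal_mul, mul_comm, div_mul_div_cancel₀ (hu _),
      show k + d + N * d = k + (N + 1 : ℕ) * d by push_cast; ring]

theorem units_inv {V : (l2 →L[ℂ] l2)ˣ} (hV : IsWeightedShift u d V) (hu : ∀ n, u n ≠ 0) :
    IsWeightedShift u (-d) ↑V⁻¹ := by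
  intro f n
  have hVV : (V : l2 →L[ℂ] l2) (((V⁻¹ : (l2 →L[ℂ] l2)ˣ) : l2 →L[ℂ] l2) f) = f := by
    rw [← mul_apply_eq_comp, V.mul_inv, one_apply_eq_self]
  have h := hV (((V⁻¹ : (l2 →L[ℂ] l2)ˣ) : l2 →L[ℂ] l2) f) (n + d)
  rw [hVV, add_sub_cancel_right] at h
  rw [sub_neg_eq_add, h, ← mul_assoc, ← Complex.ofReal_mul, div_mul_div_cancel₀ (hu _),
    div_self (hu n), Complex.ofReal_one, one_mul]

theorem dense_S0_smul (hA : IsWeightedShift u d A) (hu : ∀ n, u n ≠ 0) (a : ℝ)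
    (hlim : ∀ k, Tendsto (fun N : ℕ => |a| ^ N * |u (k + N * d) / u k|) atTop (nhds 0)) :
    Dense (S0 ((a : ℂ) • A)) :=
  dense_S0_of_single_mem fun k => by
    show Tendsto (fun N : ℕ => ‖(((a : ℂ) • A) ^ N) (lp.single 2 k 1)‖) atTop (nhds 0)
    simpa only [smul_pow, smul_apply, hA.pow_apply_single hu, norm_smul, norm_pow,
      Complex.norm_real, Real.norm_eq_abs, norm_single_one, mul_one, mul_assoc]
      using hlim k

theorem S0_smul_adjoint_eq_singleton_zero (hA : IsWeightedShift u d A) (hu : ∀ n, u n ≠ 0)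
    (a : ℝ)
    (hlim : ∀ m, Tendsto (fun N : ℕ => |a| ^ N * |u m / u (m - N * d)|) atTop atTop) :
    S0 ((a : ℂ) • adjoint A) = {0} := by
  have hadj : (a : ℂ) • adjoint A = adjoint ((a : ℂ) • A) := by
    rw [← star_eq_adjoint, ← star_eq_adjoint, star_smul, Complex.star_def, Complex.conj_ofReal]
  refine hadj ▸ S0_adjoint_eq_singleton_zero fun m =>
    ⟨fun N => m - N * d, fun N => (a : ℂ) ^ N * ((u m / u (m - N * d) : ℝ) : ℂ), ?_, fun N => ?_⟩
  · simpa [abs_div] using hlim m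
  · rw [smul_pow, smul_apply, hA.pow_apply_single hu, sub_add_cancel, smul_smul]

end IsWeightedShift

def expWeight (b : ℝ) (n : ℤ) : ℝ := b ^ (-|(n : ℝ)|)

section expWeight

variable {b : ℝ}

theorem expWeight_pos (hb : 0 < b) (n : ℤ) : 0 < expWeight b n :=
  rpow_pos_of_pos hb _

theorem expWeight_add_mul_le (hb : 1 ≤ b) {d : ℤ} (hd : d ≠ 0) (k : ℤ) (N : ℕ) :
    expWeight b (k + N * d) ≤ b ^ |(k : ℝ)| / b ^ N := by
  have hexp : (N : ℤ) ≤ |k + N * d| + |k| := calc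
    (N : ℤ) ≤ |(N : ℤ) * d| := by
      rw [abs_mul, Nat.abs_cast]
      exact le_mul_of_one_le_right (Nat.cast_nonneg N) (Int.one_le_abs hd)
    _ ≤ |k + N * d| + |k| := by
      simpa using abs_sub (k + N * d) k
  rw [expWeight, ← rpow_natCast, ← rpow_sub (by linarith)]
  apply rpow_le_rpow_of_exponent_le hb
  have : ((N : ℤ) : ℝ) ≤ ((|k + N * d| + |k| : ℤ) : ℝ) := Int.cast_le.mpr hexp
  push_cast at this ⊢
  linarith

theorem tendsto_pow_mul_expWeight_ratio_nhds_zero (hb : 1 ≤ b) {a : ℝ} (hab : |a| < b)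
    {d : ℤ} (hd : d ≠ 0) (k : ℤ) :
    Tendsto (fun N : ℕ => |a| ^ N * |expWeight b (k + N * d) / expWeight b k|)
      atTop (nhds 0) := by
  have hw := expWeight_pos (b := b) (by linarith)
  have hbound : ∀ N : ℕ, |a| ^ N * |expWeight b (k + N * d) / expWeight b k|
      ≤ (|a| / b) ^ N * (b ^ |(k : ℝ)| / expWeight b k) := fun N => calc
    _ = |a| ^ N * (expWeight b (k + N * d) / expWeight b k) := by
      rw [abs_of_pos (div_pos (hw _) (hw _))]
    _ ≤ |a| ^ N * (b ^ |(k : ℝ)| / b ^ N / expWeight b k) := by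
      have hle := expWeight_add_mul_le hb hd k N
      gcongr
      exact (hw k).le
    _ = (|a| / b) ^ N * (b ^ |(k : ℝ)| / expWeight b k) := by
      rw [div_pow]
      field_simp
  have hgeom := (tendsto_pow_atTop_nhds_zero_of_lt_one (by positivity)
    ((div_lt_one (by linarith)).mpr hab)).mul_const (b ^ |(k : ℝ)| / expWeight b k)
  rw [zero_mul] at hgeom
  exact squeeze_zero (fun N => by positivity) hbound hgeom

theorem tendsto_pow_mul_expWeight_ratio_atTop (hb : 1 ≤ b) {a : ℝ} (hab : 1 < |a| * b)
    {d : ℤ} (hd : d ≠ 0) (m : ℤ) :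
    Tendsto (fun N : ℕ => |a| ^ N * |expWeight b m / expWeight b (m - N * d)|)
      atTop atTop := by
  have hw := expWeight_pos (b := b) (by linarith)
  have hbound : ∀ N : ℕ, (|a| * b) ^ N * (expWeight b m / b ^ |(m : ℝ)|)
      ≤ |a| ^ N * |expWeight b m / expWeight b (m - N * d)| := fun N => by
    have hle := expWeight_add_mul_le hb (neg_ne_zero.mpr hd) m N
    rw [mul_neg, ← sub_eq_add_neg] at hle
    calc (|a| * b) ^ N * (expWeight b m / b ^ |(m : ℝ)|)
        = |a| ^ N * (expWeight b m / (b ^ |(m : ℝ)| / b ^ N)) := by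
          rw [mul_pow]
          field_simp
      _ ≤ |a| ^ N * (expWeight b m / expWeight b (m - N * d)) := by
          gcongr
          exacts [(hw m).le, hw _]
      _ = _ := by rw [abs_of_pos (div_pos (hw _) (hw _))]
  exact tendsto_atTop_mono hbound
    ((tendsto_pow_atTop_atTop_of_one_lt hab).atTop_mul_const (div_pos (hw m) (by positivity)))

end expWeight

/-- For the weighted bilateral shift `V` with weights `v n = (2c)^(−|n|)` (`c ≥ 1`):
`S₀((3c/2)·V)` and `S₀((3c/2)·V⁻¹)` are dense in `ℓ²(ℤ,ℂ)`, while
`S₀((2/(3c))·(V*)⁻¹) = {0}` and `S₀((2/(3c))·V*) = {0}`. -/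
theorem stmt15 (c : ℝ) (hc : 1 ≤ c)
    (v : ℤ → ℝ) (hv : ∀ n : ℤ, v n = (2 * c) ^ (-|(n : ℝ)|))
    (V : (l2 →L[ℂ] l2)ˣ)
    (hV : ∀ (f : l2) (n : ℤ),
      (V : l2 →L[ℂ] l2) f n = ((v n / v (n - 1) : ℝ) : ℂ) * f (n - 1)) :
    Dense (S0 (((3 * c / 2 : ℝ) : ℂ) • (V : l2 →L[ℂ] l2))) ∧
    S0 (((2 / (3 * c) : ℝ) : ℂ) •
        adjoint ((V⁻¹ : (l2 →L[ℂ] l2)ˣ) : l2 →L[ℂ] l2)) = {0} ∧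
    Dense (S0 (((3 * c / 2 : ℝ) : ℂ) • ((V⁻¹ : (l2 →L[ℂ] l2)ˣ) : l2 →L[ℂ] l2))) ∧
    S0 (((2 / (3 * c) : ℝ) : ℂ) • adjoint (V : l2 →L[ℂ] l2)) = {0} := by
  obtain rfl : v = expWeight (2 * c) := funext hv
  have hb : 1 ≤ 2 * c := by linarith
  have hw : ∀ n, expWeight (2 * c) n ≠ 0 := fun n => (expWeight_pos (by linarith) n).ne'
  have hV : IsWeightedShift (expWeight (2 * c)) 1 V := hV
  have hVinv := hV.units_inv hw
  have hcontract : |3 * c / 2| < 2 * c := by rw [abs_of_pos (by linarith)]; linarith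
  have hexpand : 1 < |2 / (3 * c)| * (2 * c) := by
    rw [abs_of_pos (by positivity), div_mul_eq_mul_div, lt_div_iff₀ (by positivity)]
    linarith
  have h1 : (1 : ℤ) ≠ 0 := one_ne_zero
  have hm1 : (-1 : ℤ) ≠ 0 := by norm_num
  exact ⟨hV.dense_S0_smul hw _ (tendsto_pow_mul_expWeight_ratio_nhds_zero hb hcontract h1),
    hVinv.S0_smul_adjoint_eq_singleton_zero hw _
      (tendsto_pow_mul_expWeight_ratio_atTop hb hexpand hm1),
    hVinv.dense_S0_smul hw _ (tendsto_pow_mul_expWeight_ratio_nhds_zero hb hcontract hm1),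
    hV.S0_smul_adjoint_eq_singleton_zero hw _
      (tendsto_pow_mul_expWeight_ratio_atTop hb hexpand h1)⟩
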